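/- Let g be the Lie algebra 23457B with structure equations de^1=de^2=0, de^3=-e^{12}, de^4=-e^{13}, de^5=-e^{14}, de^6=-e^{25}+e^{34}, de^7=-e^{23}. Then for every closed 4-form ρ ∈ Λ⁴g*, writing ρ̂ for the 3-vector with ι_{ρ̂}(e^{1234567})=ρ, the quantity (1/6)·ι_{e^1}ρ̂ ∧ ι_{e^1}ρ̂ ∧ ρ̂ vanishes (i.e., the (1,1)-entry of the associated symmetric matrix B_ρ is zero). -/

import Mathlib

noncomputable section

/-- We model the dual `g*` of a 7-dimensional real Lie algebra on `ℝ⁷`. -/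
abbrev V7 : Type := Fin 7 → ℝ

/-- The exterior algebra `Λ•g*` of forms. -/
abbrev E7 : Type := ExteriorAlgebra ℝ V7

/-- The generators `e^1, …, e^7` (indexed `0, …, 6`). -/
def ε (i : Fin 7) : E7 := ExteriorAlgebra.ι ℝ (Pi.single i 1)

/-- The degree-`k` component `Λ^k g*` of the exterior algebra. -/
def deg (k : ℕ) : Submodule ℝ E7 :=
  LinearMap.range (ExteriorAlgebra.ι ℝ : V7 →ₗ[ℝ] E7) ^ k

/-- Dualization `g → g**` induced by the standard basis (identifying `g ≅ ℝ⁷`). -/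
def dualize : V7 →ₗ[ℝ] Module.Dual ℝ V7 := (Pi.basisFun ℝ (Fin 7)).toDual

/-- Interior product (contraction) `ι_v` of forms with a vector `v ∈ g`. -/
def ic (v : V7) : E7 →ₗ[ℝ] E7 := CliffordAlgebra.contractLeft (dualize v)

lemma ic_sq (v : V7) : (ic v) * (ic v) = 0 := by
  ext x
  simp [ic, Module.End.mul_apply, CliffordAlgebra.contractLeft_contractLeft]

/-- Contraction of forms by multivectors (identified with elements of `E7` via the
basis), extended multiplicatively from contraction by vectors. -/
def contra : E7 →ₐ[ℝ] Module.End ℝ E7 :=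
  ExteriorAlgebra.lift ℝ
    ⟨{ toFun := ic,
       map_add' := by intro a b; ext x; simp [ic],
       map_smul' := by intro c a; ext x; simp [ic] }, fun v => ic_sq v⟩

/-- The standard volume form `e^{1234567}`. -/
def vol7 : E7 := ε 0 * ε 1 * ε 2 * ε 3 * ε 4 * ε 5 * ε 6

/-- The standard `G₂` 3-form
`φ₀ = e^{127}+e^{347}+e^{567}+e^{135}-e^{146}-e^{236}-e^{245}`. -/
def phi0 : E7 :=
  ε 0*ε 1*ε 6 + ε 2*ε 3*ε 6 + ε 4*ε 5*ε 6 + ε 0*ε 2*ε 4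
    - ε 0*ε 3*ε 5 - ε 1*ε 2*ε 5 - ε 1*ε 3*ε 4

/-- The standard `G₂` 4-form
`σ₀ = e^{3456}+e^{1256}+e^{1234}+e^{2467}-e^{2357}-e^{1457}-e^{1367}` (the Hodge dual
of `φ₀` for the Euclidean metric and standard orientation). -/
def sigma0 : E7 :=
  ε 2*ε 3*ε 4*ε 5 + ε 0*ε 1*ε 4*ε 5 + ε 0*ε 1*ε 2*ε 3 + ε 1*ε 3*ε 5*ε 6
    - ε 1*ε 2*ε 4*ε 6 - ε 0*ε 3*ε 4*ε 6 - ε 0*ε 2*ε 5*ε 6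

/-- A 4-form is positive (stable) if it lies in the `GL(7,ℝ)`-orbit of the standard
`G₂` 4-form `σ₀`. -/
def Positive4 (σ : E7) : Prop :=
  ∃ A : V7 ≃ₗ[ℝ] V7, ExteriorAlgebra.map (A.toLinearMap) sigma0 = σ

/-- `IsCE dg D` says that `D` is the Chevalley–Eilenberg differential, extended as an
odd (degree-1) derivation to `Λ•g*`, of the Lie algebra whose structure equations are
`d e^i = dg i`: it kills constants and satisfies the graded Leibniz rule against
degree-one elements (this characterizes `D` uniquely). -/
def IsCE (dg : Fin 7 → E7) (D : E7 →ₗ[ℝ] E7) : Prop :=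
  D 1 = 0 ∧ ∀ (i : Fin 7) (y : E7), D (ε i * y) = dg i * y - ε i * D y

/-- Structure equations of the Lie algebra `23457B`:
`de^1 = de^2 = 0`, `de^3 = -e^{12}`, `de^4 = -e^{13}`, `de^5 = -e^{14}`,
`de^6 = -e^{25}+e^{34}`, `de^7 = -e^{23}`. -/
def dg23457B : Fin 7 → E7 :=
  ![0, 0, -(ε 0 * ε 1), -(ε 0 * ε 2), -(ε 0 * ε 3),
    -(ε 1 * ε 4) + ε 2 * ε 3, -(ε 1 * ε 2)]

/-!
Write `ρ̂ = ∑_{i<j<k} a_{ijk} e^{ijk}` and `α = ι_{e_1} ρ̂`, with the paper's indices (the code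
indexes `e^1, …, e^7` by `0, …, 6`). Seven components of `dρ = 0` force `a_{1jk} = 0` for
`j ∈ {2,3}`, `k ∈ {3,4,5,7}`, `j < k`. Hence `α = e^6 ∧ β + γ` with `γ ∈ Λ²⟨e^4, e^5, e^7⟩`, so
`α ∧ α = 2 e^6 ∧ β ∧ γ` because `γ ∧ γ = 0`; completing this to a top-degree form needs a term
`e^{1jk}` of `ρ̂` with one of the vanishing coefficients.
-/

lemma ε_mul_self (i : Fin 7) : ε i * ε i = 0 := ExteriorAlgebra.ι_sq_zero _

lemma ε_mul_ε_self_mul (i : Fin 7) (y : E7) : ε i * (ε i * y) = 0 := by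
  rw [← mul_assoc, ε_mul_self, zero_mul]

lemma ε_mul_ε_eq_neg (i j : Fin 7) : ε i * ε j = -(ε j * ε i) :=
  eq_neg_of_add_eq_zero_left (ExteriorAlgebra.ι_add_mul_swap _ _)

lemma ε_mul_ε_of_lt {i j : Fin 7} (_ : j < i) : ε i * ε j = -(ε j * ε i) :=
  ε_mul_ε_eq_neg i j

lemma ε_mul_ε_mul_of_lt {i j : Fin 7} (_ : j < i) (y : E7) :
    ε i * (ε j * y) = -(ε j * (ε i * y)) := by
  rw [← mul_assoc, ε_mul_ε_eq_neg, neg_mul, mul_assoc]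

lemma ι_eq_sum_smul_ε (w : V7) : ExteriorAlgebra.ι ℝ w = ∑ i, w i • ε i := by
  simp only [ε, ← map_smul, ← map_sum, ← pi_eq_sum_univ' w]

def orderedMonomial (i j k : Fin 7) : E7 := if i < j ∧ j < k then ε i * ε j * ε k else 0

lemma ε_mul_ε_mul_ε_mem_span (i j k : Fin 7) :
    ε i * ε j * ε k ∈ Submodule.span ℝ (Set.range fun p : Fin 7 × Fin 7 × Fin 7 ↦
      orderedMonomial p.1 p.2.1 p.2.2) := by
  set S := Submodule.span ℝ (Set.range fun p : Fin 7 × Fin 7 × Fin 7 ↦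
      orderedMonomial p.1 p.2.1 p.2.2)
  have sorted {i j k : Fin 7} (hij : i ≤ j) (hjk : j ≤ k) : ε i * ε j * ε k ∈ S := by
    rcases hij.eq_or_lt with rfl | hij
    · simp [ε_mul_self]
    rcases hjk.eq_or_lt with rfl | hjk
    · simp [mul_assoc, ε_mul_self]
    exact Submodule.subset_span ⟨(i, j, k), by simp [orderedMonomial, hij, hjk]⟩
  have swap₁₂ {i j k : Fin 7} (h : ε j * ε i * ε k ∈ S) : ε i * ε j * ε k ∈ S := by
    rw [ε_mul_ε_eq_neg, neg_mul]
    exact S.neg_mem h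
  have swap₂₃ {i j k : Fin 7} (h : ε i * ε k * ε j ∈ S) : ε i * ε j * ε k ∈ S := by
    rw [mul_assoc, ε_mul_ε_eq_neg, mul_neg, ← mul_assoc]
    exact S.neg_mem h
  rcases le_total i j with hij | hij <;> rcases le_total j k with hjk | hjk <;>
    rcases le_total i k with hik | hik
  all_goals first
    | exact sorted hij hjk
    | exact swap₁₂ (sorted hij hik)
    | exact swap₂₃ (sorted hik hjk)
    | exact swap₁₂ (swap₂₃ (sorted hjk hik))
    | exact swap₂₃ (swap₁₂ (sorted hik hij))
    | exact swap₁₂ (swap₂₃ (swap₁₂ (sorted hjk hij)))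

lemma deg_three_le_span_orderedMonomial :
    deg 3 ≤ Submodule.span ℝ (Set.range fun p : Fin 7 × Fin 7 × Fin 7 ↦
      orderedMonomial p.1 p.2.1 p.2.2) := by
  rw [deg, ← ExteriorAlgebra.exteriorPower, ← ExteriorAlgebra.ιMulti_span_fixedDegree,
    Submodule.span_le]
  rintro _ ⟨v, rfl⟩
  simp only [ExteriorAlgebra.ιMulti_apply, List.ofFn_succ, List.ofFn_zero, List.prod_cons,
    List.prod_nil, mul_one, ι_eq_sum_smul_ε, Finset.sum_mul, Finset.mul_sum, smul_mul_assoc,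
    mul_smul_comm, Finset.smul_sum, ← mul_assoc]
  exact Submodule.sum_mem _ fun i _ ↦ Submodule.sum_mem _ fun j _ ↦ Submodule.sum_mem _
    fun k _ ↦ Submodule.smul_mem _ _ <| Submodule.smul_mem _ _ <| Submodule.smul_mem _ _ <|
      ε_mul_ε_mul_ε_mem_span _ _ _

def threeForm (a : Fin 7 → Fin 7 → Fin 7 → ℝ) : E7 :=
  ∑ i, ∑ j, ∑ k, a i j k • orderedMonomial i j k

lemma exists_eq_threeForm {r : E7} (hr : r ∈ deg 3) : ∃ a, r = threeForm a := by
  obtain ⟨c, hc⟩ :=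
    (Submodule.mem_span_range_iff_exists_fun ℝ).mp (deg_three_le_span_orderedMonomial hr)
  exact ⟨fun i j k ↦ c (i, j, k), by simp only [← hc, threeForm, Fintype.sum_prod_type]⟩

lemma dualize_single_apply_single (i j : Fin 7) :
    dualize (Pi.single i 1) (Pi.single j 1) = if i = j then 1 else 0 := by
  simpa [dualize] using (Pi.basisFun ℝ (Fin 7)).toDual_apply i j

lemma ic_ε (i j : Fin 7) : ic (Pi.single i 1) (ε j) = if i = j then 1 else 0 := by
  rw [ic, ε, CliffordAlgebra.contractLeft_ι, dualize_single_apply_single]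
  split_ifs <;> simp

lemma ic_ε_mul (i j : Fin 7) (y : E7) :
    ic (Pi.single i 1) (ε j * y) = (if i = j then y else 0) - ε j * ic (Pi.single i 1) y := by
  rw [ic, ε, CliffordAlgebra.contractLeft_ι_mul, dualize_single_apply_single]
  split_ifs <;> simp

lemma contra_ε (i : Fin 7) : contra (ε i) = ic (Pi.single i 1) := by
  rw [contra, ε, ExteriorAlgebra.lift_ι_apply]
  rfl

lemma IsCE.map_ε {dg : Fin 7 → E7} {D : E7 →ₗ[ℝ] E7} (hD : IsCE dg D) (i : Fin 7) :
    D (ε i) = dg i := by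
  simpa [hD.1] using hD.2 i 1

set_option maxHeartbeats 800000 in
lemma coeffs_eq_zero_of_closed {D : E7 →ₗ[ℝ] E7} (hD : IsCE dg23457B D)
    {a : Fin 7 → Fin 7 → Fin 7 → ℝ} (hclosed : D (contra (threeForm a) vol7) = 0) :
    a 0 1 2 = 0 ∧ a 0 1 3 = 0 ∧ a 0 1 4 = 0 ∧ a 0 1 6 = 0 ∧ a 0 2 3 = 0 ∧ a 0 2 4 = 0 ∧
      a 0 2 6 = 0 := by
  simp (config := { decide := true }) only [threeForm, Fin.sum_univ_seven, orderedMonomial,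
    if_true, if_false, smul_zero, add_zero, zero_add, map_add, map_smul, map_mul, contra_ε, vol7,
    LinearMap.add_apply, LinearMap.smul_apply, Module.End.mul_apply, mul_assoc, ic_ε_mul, ic_ε,
    mul_zero, mul_one, neg_zero, map_neg, smul_neg, neg_neg, mul_neg, sub_eq_add_neg] at hclosed
  simp only [hD.2, hD.map_ε, dg23457B, Matrix.cons_val, sub_eq_add_neg, zero_mul, mul_assoc,
    neg_mul, add_mul, smul_add, smul_neg, mul_neg, neg_neg, neg_add_rev, zero_add] at hclosed
  -- the coefficient of `dρ` on `e^{s₁ s₂ s₃ s₄ s₅}`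
  have component (s₁ s₂ s₃ s₄ s₅ : Fin 7) := congrArg (fun x ↦
      ExteriorAlgebra.algebraMapInv (ic (Pi.single s₅ 1) (ic (Pi.single s₄ 1)
        (ic (Pi.single s₃ 1) (ic (Pi.single s₂ 1) (ic (Pi.single s₁ 1) x)))))) hclosed
  have d₀₁₂₄₅ := component 0 1 2 4 5
  have d₀₁₂₅₆ := component 0 1 2 5 6
  have d₀₁₃₄₅ := component 0 1 3 4 5
  have d₀₁₃₅₆ := component 0 1 3 5 6
  have d₀₁₄₅₆ := component 0 1 4 5 6
  have d₀₂₃₄₆ := component 0 2 3 4 6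
  have d₀₂₄₅₆ := component 0 2 4 5 6
  have d₁₂₃₄₆ := component 1 2 3 4 6
  simp (config := { decide := true }) only [map_add, map_sub, map_smul, map_neg, ic_ε_mul, ic_ε,
    if_true, if_false, sub_zero, zero_sub, neg_zero, neg_neg, mul_zero, mul_one, mul_neg,
    smul_zero, smul_neg, add_zero, zero_add, map_one, map_zero, smul_eq_mul]
    at d₀₁₂₄₅ d₀₁₂₅₆ d₀₁₃₄₅ d₀₁₃₅₆ d₀₁₄₅₆ d₀₂₃₄₆ d₀₂₄₅₆ d₁₂₃₄₆
  refine ⟨?_, ?_, ?_, ?_, ?_, ?_, ?_⟩ <;> linarith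

lemma ic_mul_ic_mul_threeForm_eq_zero {a : Fin 7 → Fin 7 → Fin 7 → ℝ}
    (ha : a 0 1 2 = 0 ∧ a 0 1 3 = 0 ∧ a 0 1 4 = 0 ∧ a 0 1 6 = 0 ∧ a 0 2 3 = 0 ∧ a 0 2 4 = 0 ∧
      a 0 2 6 = 0) :
    ic (Pi.single 0 1) (threeForm a) * ic (Pi.single 0 1) (threeForm a) * threeForm a = 0 := by
  obtain ⟨h₀₁₂, h₀₁₃, h₀₁₄, h₀₁₆, h₀₂₃, h₀₂₄, h₀₂₆⟩ := ha
  simp (config := { decide := true }) only [threeForm, Fin.sum_univ_seven, orderedMonomial,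
    if_true, if_false, smul_zero, add_zero, zero_add, h₀₁₂, h₀₁₃, h₀₁₄, h₀₁₆, h₀₂₃, h₀₂₄, h₀₂₆,
    zero_smul]
  simp (config := { decide := true }) only [map_add, map_smul, mul_assoc, ic_ε_mul, ic_ε,
    if_true, if_false, sub_zero, mul_zero, smul_zero, add_zero]
  simp (config := { decide := true }) only [mul_add, add_mul, smul_add, smul_mul_assoc,
    mul_smul_comm, smul_smul, mul_assoc, ε_mul_self, ε_mul_ε_self_mul, ε_mul_ε_of_lt,
    ε_mul_ε_mul_of_lt, mul_zero, mul_neg, neg_neg, neg_zero, smul_zero, smul_neg, add_zero,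
    zero_add]

/-- fourth obstruction on `23457B`: for every closed 4-form `ρ` on
`23457B`, writing `ρ̂` for the 3-vector with `ι_{ρ̂}(e^{1234567}) = ρ`, the `(1,1)`
entry `(1/6)·ι_{e_1}ρ̂ ∧ ι_{e_1}ρ̂ ∧ ρ̂` of the matrix `B_ρ` vanishes. -/
theorem stmt6_23457B_B11_zero (D : E7 →ₗ[ℝ] E7) (hD : IsCE dg23457B D) :
    ∀ ρ ∈ deg 4, D ρ = 0 → ∀ r ∈ deg 3, contra r vol7 = ρ →
      (6 : ℝ)⁻¹ • (ic (Pi.single 0 1) r * ic (Pi.single 0 1) r * r) = 0 := by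
  rintro ρ - hclosed r hr rfl
  obtain ⟨a, rfl⟩ := exists_eq_threeForm hr
  rw [ic_mul_ic_mul_threeForm_eq_zero (coeffs_eq_zero_of_closed hD hclosed), smul_zero]
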